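/- arXiv:1405.2006 — 3 statements merged into one kernel-verified Lean document; each statement's English description precedes it below -/
import Mathlib

section
/- If A is a PK×PK complex block matrix (with K×K blocks) and R ≥ K is an integer, then ‖T^{(P)}_{R,K}(A)‖ ≤ sup_{ν∈[0,1]} |a_K(ν)* Â a_K(ν)| ≤ ‖A‖, where Â = (1/P)∑_{p=1}^{P} A^{p,p}. If A is a K×K complex matrix and R ≤ K, then ‖T_{R,R}(A)‖ ≤ sup_{ν∈[0,1]} |a_K(ν)* A a_K(ν)| ≤ ‖A‖. -/
open MeasureTheory ProbabilityTheory Matrix Filter Topology Finset Kronecker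
open scoped Matrix.Norms.L2Operator

noncomputable section

/-- The Marcenko–Pastur distribution with parameters `s = σ²` and `c`. -/
def mpMeasure (s c : ℝ) : Measure ℝ :=
  ENNReal.ofReal (1 - 1/c) • Measure.dirac 0 +
    MeasureTheory.volume.withDensity
      (Set.indicator (Set.Icc (s*(1-Real.sqrt c)^2) (s*(1+Real.sqrt c)^2))
        (fun x => ENNReal.ofReal
          (Real.sqrt ((s*(1+Real.sqrt c)^2 - x) * (x - s*(1-Real.sqrt c)^2)) /
            (2*Real.pi*s*c*x))))

/-- Stieltjes transform of the Marcenko–Pastur distribution. -/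
def stT (s c : ℝ) (z : ℂ) : ℂ := ∫ x, ((x:ℂ) - z)⁻¹ ∂(mpMeasure s c)

def stTilde (s c : ℝ) (z : ℂ) : ℂ := -1 / (z * (1 + (s : ℂ) * (c : ℂ) * stT s c z))

def mpS0 (s c : ℝ) : Set ℝ := Set.Icc (s*(1-Real.sqrt c)^2) (s*(1+Real.sqrt c)^2)

def mpSupp (s c : ℝ) : Set ℝ := if 1 < c then mpS0 s c ∪ {0} else mpS0 s c

/-- The `ML × N` block-Hankel matrix built from the scalars `w`. -/
def hankelW (L N : ℕ) {M : ℕ} (w : Fin M → Fin (N + L - 1) → ℂ) :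
    Matrix (Fin M × Fin L) (Fin N) ℂ :=
  Matrix.of fun p j => w p.1 ⟨p.2.1 + j.1, by
    have h1 := p.2.isLt; have h2 := j.isLt; omega⟩

/-- `X ↦ (re X, im X)` indexed by a boolean. -/
def reim (x : ℂ) : Bool → ℝ := fun b => if b then x.re else x.im

/-- The family `(w i)` is i.i.d. complex Gaussian with independent real and imaginary
parts, each `N(0, σ²/(2N))`. -/
def IsGaussianFamily {Ω : Type*} [MeasurableSpace Ω] (μ : Measure Ω)
    (σ : ℝ) (N : ℕ) {ι : Type*} (w : ι → Ω → ℂ) : Prop :=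
  iIndepFun
      (fun p : ι × Bool => fun ω => reim (w p.1 ω) p.2) μ ∧
  ∀ p : ι × Bool,
    Measure.map (fun ω => reim (w p.1 ω) p.2) μ =
      gaussianReal 0 (Real.toNNReal (σ^2 / (2*N)))

/-- Resolvent `(A - z I)⁻¹`. -/
def resolv {n : Type*} [Fintype n] [DecidableEq n] (A : Matrix n n ℂ) (z : ℂ) :
    Matrix n n ℂ := (A - z • 1)⁻¹

/-- eigenvalues of W W^*. -/
def eigenW (L M N : ℕ) (w : Fin M → Fin (N + L - 1) → ℂ) : Fin M × Fin L → ℝ :=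
  (Matrix.isHermitian_mul_conjTranspose_self (hankelW L N w)).eigenvalues

/-- `τ^{(P)}(A)(k)`. -/
def tauP (P K : ℕ) (A : Matrix (Fin P × Fin K) (Fin P × Fin K) ℂ) (k : ℤ) : ℂ :=
  (1 / (P * K : ℂ)) * ∑ p : Fin P, ∑ i : Fin K, ∑ j : Fin K,
    if (i : ℤ) - (j : ℤ) = k then A (p, i) (p, j) else 0

/-- `T^{(P)}_{R,Q}(A)`. -/
def TmatP (P K R Q : ℕ) (A : Matrix (Fin P × Fin K) (Fin P × Fin K) ℂ) :
    Matrix (Fin R) (Fin R) ℂ :=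
  Matrix.of fun i j =>
    if |(i : ℤ) - (j : ℤ)| ≤ (Q : ℤ) - 1 then tauP P K A ((i : ℤ) - (j : ℤ)) else 0

/-- `τ(A)(k)` (case `P = 1`). -/
def tau1 (K : ℕ) (A : Matrix (Fin K) (Fin K) ℂ) (k : ℤ) : ℂ :=
  (1 / (K : ℂ)) * ∑ i : Fin K, ∑ j : Fin K,
    if (i : ℤ) - (j : ℤ) = k then A i j else 0

/-- `T_{R,Q}(A)` (case `P = 1`). -/
def Tmat1 (K R Q : ℕ) (A : Matrix (Fin K) (Fin K) ℂ) : Matrix (Fin R) (Fin R) ℂ :=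
  Matrix.of fun i j =>
    if |(i : ℤ) - (j : ℤ)| ≤ (Q : ℤ) - 1 then tau1 K A ((i : ℤ) - (j : ℤ)) else 0

/-- the vector `a_K(ν)`. -/
def aVec (K : ℕ) (ν : ℝ) : Fin K → ℂ :=
  fun k => (1 / Real.sqrt K : ℝ) * Complex.exp (2 * Real.pi * Complex.I * ν * k)

/-- Euclidean norm of a complex vector. -/
def vNorm {n : Type*} [Fintype n] (a : n → ℂ) : ℝ :=
  Real.sqrt (∑ i, ‖a i‖ ^ 2)

/-- Variance of a complex random variable. -/
def cvar {Ω : Type*} [MeasurableSpace Ω] (μ : Measure Ω) (X : Ω → ℂ) : ℝ :=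
  (∫ ω, ‖X ω‖ ^ 2 ∂μ) - ‖∫ ω, X ω ∂μ‖ ^ 2

/-- A nice polynomial: the coefficients up to the degree are positive constants. -/
def NicePoly (P : Polynomial ℝ) : Prop := ∀ n ≤ P.natDegree, 0 < P.coeff n

/-- `Â = (1/P) ∑_p A^{p,p}`. -/
def hatBlock (P K : ℕ) (A : Matrix (Fin P × Fin K) (Fin P × Fin K) ℂ) :
    Matrix (Fin K) (Fin K) ℂ :=
  Matrix.of fun i j => (1 / (P : ℂ)) * ∑ p : Fin P, A (p, i) (p, j)

/-!
Write `f(ν) = a_K(ν)* M a_K(ν)`. It is a trigonometric polynomial whose Fourier coefficients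
are the `τ(M)(k)`, `|k| < K`, so sampling `f` at the `N = K + R` points `m / N` recovers them
exactly. This factors the Toeplitz matrix `(τ(M)(i - j))_{i,j<R}` as `B diag(f(m/N)) B*`, where
`B` consists of the first `R` rows of the unitary `N`-point DFT matrix. As `B` has orthonormal
rows, its norm is at most `max_m |f(m/N)| ≤ sup_ν |f(ν)|`, and `|f(ν)| ≤ ‖M‖` since
`‖a_K(ν)‖ = 1`. The block case is the case `M = Â`: `τ^{(P)}(A) = τ(Â)`, the cutoff at `K` is
automatic, and `‖Â‖ ≤ ‖A‖` because `Â` is an average of compressions `A^{p,p}` of `A`.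
-/

lemma l2_opNorm_le_one_of_conjTranspose_mul_self_eq_one {𝕜 m n : Type*} [RCLike 𝕜] [Fintype m]
    [Fintype n] [DecidableEq n] {A : Matrix m n 𝕜} (h : Aᴴ * A = 1) : ‖A‖ ≤ 1 := by
  have hsq : ‖A‖ * ‖A‖ ≤ 1 := by
    rw [← l2_opNorm_conjTranspose_mul_self, h, ← diagonal_one, l2_opNorm_diagonal]
    exact pi_norm_le_iff_of_nonneg zero_le_one |>.2 fun _ => norm_one.le
  nlinarith [norm_nonneg A]

lemma l2_opNorm_submatrix_le {𝕜 ι κ : Type*} [RCLike 𝕜] [Fintype ι] [Fintype κ] [DecidableEq ι]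
    [DecidableEq κ] (A : Matrix ι ι 𝕜) {e : κ → ι} (he : Function.Injective e) :
    ‖A.submatrix e e‖ ≤ ‖A‖ := by
  set E : Matrix ι κ 𝕜 := (1 : Matrix ι ι 𝕜).submatrix id e
  have hE_conj : Eᴴ = (1 : Matrix ι ι 𝕜).submatrix e id := by
    rw [conjTranspose_submatrix, conjTranspose_one]
  have hsub : A.submatrix e e = Eᴴ * A * E := by
    rw [hE_conj, Matrix.mul_assoc]
    change _ = (1 : Matrix ι ι 𝕜).submatrix e (Equiv.refl ι) *
      (A * (1 : Matrix ι ι 𝕜).submatrix (Equiv.refl ι) e)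
    rw [mul_submatrix_one, one_submatrix_mul]
    rfl
  have hE : ‖E‖ ≤ 1 := by
    refine l2_opNorm_le_one_of_conjTranspose_mul_self_eq_one ?_
    rw [hE_conj]
    change (1 : Matrix ι ι 𝕜).submatrix e (Equiv.refl ι) * E = 1
    rw [one_submatrix_mul]
    exact submatrix_one e he
  calc ‖A.submatrix e e‖ ≤ ‖Eᴴ‖ * ‖A‖ * ‖E‖ := by
        grw [hsub, l2_opNorm_mul, l2_opNorm_mul]
    _ ≤ 1 * ‖A‖ * 1 := by rw [l2_opNorm_conjTranspose]; gcongr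
    _ = ‖A‖ := by ring

lemma norm_star_dotProduct_mulVec_le {𝕜 n : Type*} [RCLike 𝕜] [Fintype n] [DecidableEq n]
    (A : Matrix n n 𝕜) (x : n → 𝕜) :
    ‖star x ⬝ᵥ A *ᵥ x‖ ≤ ‖A‖ * ‖WithLp.toLp 2 x‖ ^ 2 := by
  have hinner : star x ⬝ᵥ A *ᵥ x = inner 𝕜 (WithLp.toLp 2 x) (WithLp.toLp 2 (A *ᵥ x)) := by
    rw [EuclideanSpace.inner_toLp_toLp, dotProduct_comm]
  calc ‖star x ⬝ᵥ A *ᵥ x‖ ≤ ‖WithLp.toLp 2 x‖ * ‖WithLp.toLp 2 (A *ᵥ x)‖ := by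
        rw [hinner]; exact norm_inner_le_norm _ _
    _ ≤ ‖WithLp.toLp 2 x‖ * (‖A‖ * ‖WithLp.toLp 2 x‖) := by
        gcongr; exact l2_opNorm_mulVec A (WithLp.toLp 2 x)
    _ = ‖A‖ * ‖WithLp.toLp 2 x‖ ^ 2 := by ring

lemma le_biSup_of_bddAbove_image {ι α : Type*} [ConditionallyCompleteLattice α] {f : ι → α}
    {s : Set ι} (hf : BddAbove (f '' s)) {x : ι} (hx : x ∈ s) : f x ≤ ⨆ y ∈ s, f y := by
  refine le_ciSup₂ (f := fun y (_ : y ∈ s) => f y) ?_ x hx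
  obtain ⟨C, hC⟩ := hf
  exact ⟨C, by
    simp only [mem_upperBounds, Set.mem_iUnion, Set.mem_range]
    rintro _ ⟨y, hy, rfl⟩
    exact hC ⟨y, hy, rfl⟩⟩

open Complex in
def dftEntry (N : ℕ) (k : ℤ) (m : ℕ) : ℂ := exp (2 * Real.pi * I * k * m / N)

lemma dftEntry_mul (N : ℕ) (k l : ℤ) (m : ℕ) :
    dftEntry N k m * dftEntry N l m = dftEntry N (k + l) m := by
  rw [dftEntry, dftEntry, dftEntry, ← Complex.exp_add]
  push_cast
  ring_nf

lemma conj_dftEntry (N : ℕ) (k : ℤ) (m : ℕ) :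
    starRingEnd ℂ (dftEntry N k m) = dftEntry N (-k) m := by
  rw [dftEntry, dftEntry, ← Complex.exp_conj]
  simp only [map_div₀, map_mul, map_ofNat, Complex.conj_ofReal, Complex.conj_I,
    map_intCast, map_natCast]
  push_cast
  ring_nf

lemma sum_dftEntry_of_abs_lt {N : ℕ} {k : ℤ} (hk : |k| < N) :
    ∑ m : Fin N, dftEntry N k m = if k = 0 then (N : ℂ) else 0 := by
  split_ifs with h0
  · simp [dftEntry, h0]
  set z := Complex.exp (2 * Real.pi * Complex.I * k / N)
  have hpow (m : ℕ) : dftEntry N k m = z ^ m := by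
    rw [dftEntry, ← Complex.exp_nat_mul]
    ring_nf
  have hN : (N : ℂ) ≠ 0 := by
    have := abs_nonneg k
    norm_cast; omega
  have hzN : z ^ N = 1 := by
    rw [← Complex.exp_nat_mul, Complex.exp_eq_one_iff]
    exact ⟨k, by field_simp⟩
  have hz : z ≠ 1 := by
    rw [Ne, Complex.exp_eq_one_iff]
    rintro ⟨n, hn⟩
    have hkn : (k : ℂ) = n * N := by
      field_simp at hn
      linear_combination hn
    exact h0 (Int.eq_zero_of_abs_lt_dvd ⟨n, by exact_mod_cast hkn.trans (mul_comm _ _)⟩ hk)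
  simp only [hpow, Fin.sum_univ_eq_sum_range (fun m => z ^ m)]
  have := geom_sum_mul z N
  rw [hzN, sub_self] at this
  exact (mul_eq_zero.1 this).resolve_right (sub_ne_zero.2 hz)

lemma ofReal_inv_sqrt_mul_self (n : ℕ) :
    (((Real.sqrt n)⁻¹ : ℝ) : ℂ) * (((Real.sqrt n)⁻¹ : ℝ) : ℂ) = 1 / n := by
  rw [← Complex.ofReal_mul, ← mul_inv, Real.mul_self_sqrt n.cast_nonneg]
  push_cast
  ring

def dftMatrix (R N : ℕ) : Matrix (Fin R) (Fin N) ℂ :=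
  of fun i m => ((Real.sqrt N)⁻¹ : ℝ) * dftEntry N i m

lemma dftMatrix_mul_conjTranspose {R N : ℕ} (h : R ≤ N) :
    dftMatrix R N * (dftMatrix R N)ᴴ = 1 := by
  ext i j
  have hij : |(i : ℤ) - j| < N := abs_lt.2 ⟨by omega, by omega⟩
  simp only [mul_apply, conjTranspose_apply, dftMatrix, of_apply, RCLike.star_def, map_mul,
    Complex.conj_ofReal, conj_dftEntry]
  calc _ = 1 / N * ∑ m : Fin N, dftEntry N (i - j) m := by
        rw [Finset.mul_sum, ← ofReal_inv_sqrt_mul_self N]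
        refine Finset.sum_congr rfl fun m _ => ?_
        rw [sub_eq_add_neg, ← dftEntry_mul]
        ring
    _ = (1 : Matrix (Fin R) (Fin R) ℂ) i j := by
        rw [sum_dftEntry_of_abs_lt hij, one_apply]
        have : (N : ℂ) ≠ 0 := by have := i.pos; norm_cast; omega
        simp only [sub_eq_zero, Int.ofNat_inj, Fin.val_inj]
        split_ifs <;> simp [this]

lemma aVec_natCast_div_apply (K N m : ℕ) (k : Fin K) :
    aVec K ((m : ℝ) / N) k = ((Real.sqrt K)⁻¹ : ℝ) * dftEntry N k m := by
  rw [aVec, dftEntry, one_div]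
  push_cast
  ring_nf

lemma norm_aVec_le_one (K : ℕ) (ν : ℝ) : ‖WithLp.toLp 2 (aVec K ν)‖ ≤ 1 := by
  have hentry (k : Fin K) : ‖aVec K ν k‖ ^ 2 = 1 / K := by
    have hphase :
        2 * Real.pi * Complex.I * ν * k = ((2 * Real.pi * ν * k : ℝ) : ℂ) * Complex.I := by
      push_cast; ring
    rw [aVec, norm_mul, hphase, Complex.norm_exp_ofReal_mul_I, mul_one, Complex.norm_real,
      Real.norm_eq_abs, sq_abs, div_pow, one_pow, Real.sq_sqrt K.cast_nonneg]
  have hsq : ‖WithLp.toLp 2 (aVec K ν)‖ ^ 2 ≤ 1 := by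
    rw [EuclideanSpace.norm_sq_eq]
    simp only [hentry, Finset.sum_const, Finset.card_univ, Fintype.card_fin, nsmul_eq_mul]
    rcases Nat.eq_zero_or_pos K with rfl | hK
    · simp
    · rw [mul_one_div_cancel (by positivity)]
  nlinarith [norm_nonneg (WithLp.toLp 2 (aVec K ν))]

lemma quadForm_aVec_natCast_div {K : ℕ} (M : Matrix (Fin K) (Fin K) ℂ) (N m : ℕ) :
    star (aVec K ((m : ℝ) / N)) ⬝ᵥ M *ᵥ aVec K ((m : ℝ) / N)
      = (1 / K) * ∑ i, ∑ j, M i j * dftEntry N (j - i) m := by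
  simp only [dotProduct, mulVec, Finset.mul_sum, Pi.star_apply, aVec_natCast_div_apply,
    RCLike.star_def, map_mul, Complex.conj_ofReal, conj_dftEntry]
  refine Finset.sum_congr rfl fun i _ => Finset.sum_congr rfl fun j _ => ?_
  rw [← ofReal_inv_sqrt_mul_self K, sub_eq_neg_add, ← dftEntry_mul]
  ring

lemma norm_quadForm_aVec_le {K : ℕ} (M : Matrix (Fin K) (Fin K) ℂ) (ν : ℝ) :
    ‖star (aVec K ν) ⬝ᵥ M *ᵥ aVec K ν‖ ≤ ‖M‖ := by
  calc _ ≤ ‖M‖ * ‖WithLp.toLp 2 (aVec K ν)‖ ^ 2 := norm_star_dotProduct_mulVec_le M _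
    _ ≤ ‖M‖ * 1 ^ 2 := by gcongr; exact norm_aVec_le_one K ν
    _ = ‖M‖ := by ring

lemma iSup_norm_quadForm_aVec_le {K : ℕ} (M : Matrix (Fin K) (Fin K) ℂ) :
    (⨆ ν ∈ Set.Icc (0 : ℝ) 1, ‖star (aVec K ν) ⬝ᵥ M *ᵥ aVec K ν‖) ≤ ‖M‖ :=
  Real.iSup_le (fun ν => Real.iSup_le (fun _ => norm_quadForm_aVec_le M ν) (norm_nonneg M))
    (norm_nonneg M)

lemma norm_quadForm_aVec_le_iSup {K : ℕ} (M : Matrix (Fin K) (Fin K) ℂ) {ν : ℝ}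
    (hν : ν ∈ Set.Icc (0 : ℝ) 1) :
    ‖star (aVec K ν) ⬝ᵥ M *ᵥ aVec K ν‖
      ≤ ⨆ ν ∈ Set.Icc (0 : ℝ) 1, ‖star (aVec K ν) ⬝ᵥ M *ᵥ aVec K ν‖ :=
  le_biSup_of_bddAbove_image ⟨‖M‖, by rintro _ ⟨ν, -, rfl⟩; exact norm_quadForm_aVec_le M ν⟩ hν

-- `|k| + K ≤ N` rules out aliasing: every frequency `j - i + k` below has modulus `< N`.
lemma tau1_eq_sum_quadForm_aVec {K : ℕ} (M : Matrix (Fin K) (Fin K) ℂ) {N : ℕ} {k : ℤ}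
    (hk : |k| + K ≤ N) :
    tau1 K M k = (1 / N) * ∑ m : Fin N,
      star (aVec K ((m : ℝ) / N)) ⬝ᵥ M *ᵥ aVec K ((m : ℝ) / N) * dftEntry N k m := by
  rcases Nat.eq_zero_or_pos K with rfl | hK
  · simp [tau1]
  have hN : (N : ℂ) ≠ 0 := by norm_cast; have := abs_nonneg k; omega
  have hsum (i j : Fin K) : ∑ m : Fin N, dftEntry N (j - i + k) m
      = if (i : ℤ) - j = k then (N : ℂ) else 0 := by
    have hi := i.isLt
    have hj := j.isLt
    have := neg_abs_le k
    have := le_abs_self k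
    rw [sum_dftEntry_of_abs_lt (abs_lt.2 ⟨by omega, by omega⟩)]
    simp only [show (j : ℤ) - i + k = 0 ↔ (i : ℤ) - j = k by omega]
  simp only [quadForm_aVec_natCast_div, Finset.sum_mul, Finset.mul_sum, mul_assoc, dftEntry_mul]
  rw [Finset.sum_comm, tau1, Finset.mul_sum]
  refine Finset.sum_congr rfl fun i _ => ?_
  rw [Finset.sum_comm, Finset.mul_sum]
  refine Finset.sum_congr rfl fun j _ => ?_
  rw [← Finset.mul_sum, ← Finset.mul_sum, ← Finset.mul_sum, hsum]
  split_ifs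
  · field_simp
  · simp

def tauToeplitz (K R : ℕ) (M : Matrix (Fin K) (Fin K) ℂ) : Matrix (Fin R) (Fin R) ℂ :=
  of fun i j => tau1 K M (i - j)

lemma tauToeplitz_eq_dftMatrix_mul {K R N : ℕ} (M : Matrix (Fin K) (Fin K) ℂ)
    (h : K + R ≤ N + 1) :
    tauToeplitz K R M = dftMatrix R N *
      diagonal (fun m : Fin N => star (aVec K ((m : ℝ) / N)) ⬝ᵥ M *ᵥ aVec K ((m : ℝ) / N)) *
      (dftMatrix R N)ᴴ := by
  ext i j
  rw [tauToeplitz, of_apply, tau1_eq_sum_quadForm_aVec M (N := N) (by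
    have := i.isLt; have := j.isLt
    have : |(i : ℤ) - j| < R := abs_lt.2 ⟨by omega, by omega⟩
    omega), mul_apply]
  simp only [mul_diagonal, dftMatrix, conjTranspose_apply, of_apply, star_mul', Complex.star_def,
    Complex.conj_ofReal, conj_dftEntry, Finset.mul_sum]
  refine Finset.sum_congr rfl fun m _ => ?_
  rw [← ofReal_inv_sqrt_mul_self N, sub_eq_add_neg, ← dftEntry_mul]
  ring

lemma norm_tauToeplitz_le {K R : ℕ} (M : Matrix (Fin K) (Fin K) ℂ) {S : ℝ}
    (hS : ∀ ν ∈ Set.Icc (0 : ℝ) 1, ‖star (aVec K ν) ⬝ᵥ M *ᵥ aVec K ν‖ ≤ S) :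
    ‖tauToeplitz K R M‖ ≤ S := by
  have hS0 : 0 ≤ S := (norm_nonneg _).trans (hS 0 ⟨le_rfl, zero_le_one⟩)
  have hB : ‖dftMatrix R (K + R)‖ ≤ 1 := by
    rw [← l2_opNorm_conjTranspose]
    refine l2_opNorm_le_one_of_conjTranspose_mul_self_eq_one ?_
    rw [conjTranspose_conjTranspose, dftMatrix_mul_conjTranspose (by omega)]
  rw [tauToeplitz_eq_dftMatrix_mul M (N := K + R) (by omega)]
  set D := diagonal fun m : Fin (K + R) =>
    star (aVec K ((m : ℝ) / (K + R : ℕ))) ⬝ᵥ M *ᵥ aVec K ((m : ℝ) / (K + R : ℕ))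
  have hD : ‖D‖ ≤ S := by
    refine (l2_opNorm_diagonal _).trans_le <| pi_norm_le_iff_of_nonneg hS0 |>.2 fun m =>
      hS _ ⟨by positivity, ?_⟩
    exact div_le_one_of_le₀ (by exact_mod_cast m.isLt.le) (by positivity)
  calc ‖dftMatrix R (K + R) * D * (dftMatrix R (K + R))ᴴ‖
      ≤ ‖dftMatrix R (K + R)‖ * ‖D‖ * ‖dftMatrix R (K + R)‖ := by
        grw [l2_opNorm_mul, l2_opNorm_mul, l2_opNorm_conjTranspose]
    _ ≤ 1 * S * 1 := by gcongr
    _ = S := by ring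

lemma tauP_eq_tau1_hatBlock (P K : ℕ) (A : Matrix (Fin P × Fin K) (Fin P × Fin K) ℂ) (k : ℤ) :
    tauP P K A k = tau1 K (hatBlock P K A) k := by
  have hblock (i j : Fin K) :
      (if (i : ℤ) - j = k then hatBlock P K A i j else 0)
        = 1 / P * ∑ p : Fin P, if (i : ℤ) - j = k then A (p, i) (p, j) else 0 := by
    split_ifs <;> simp [hatBlock]
  simp only [tau1, hblock, ← Finset.mul_sum, tauP]
  rw [Finset.sum_comm, Finset.sum_congr rfl fun _ _ => Finset.sum_comm]
  ring

lemma tauP_eq_zero_of_le_abs (P K : ℕ) (A : Matrix (Fin P × Fin K) (Fin P × Fin K) ℂ) {k : ℤ}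
    (hk : K ≤ |k|) : tauP P K A k = 0 := by
  refine mul_eq_zero_of_right _ (Finset.sum_eq_zero fun p _ => Finset.sum_eq_zero fun i _ =>
    Finset.sum_eq_zero fun j _ => if_neg ?_)
  have := i.isLt; have := j.isLt
  rcases abs_cases k with ⟨h, _⟩ | ⟨h, _⟩ <;> omega

lemma TmatP_eq_tauToeplitz (P K R : ℕ) (A : Matrix (Fin P × Fin K) (Fin P × Fin K) ℂ) :
    TmatP P K R K A = tauToeplitz K R (hatBlock P K A) := by
  ext i j
  rw [TmatP, tauToeplitz, of_apply, of_apply, ← tauP_eq_tau1_hatBlock, ite_eq_left_iff]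
  exact fun h => (tauP_eq_zero_of_le_abs P K A (by omega)).symm

lemma Tmat1_self_eq_tauToeplitz (K R : ℕ) (A : Matrix (Fin K) (Fin K) ℂ) :
    Tmat1 K R R A = tauToeplitz K R A := by
  ext i j
  have := i.isLt; have := j.isLt
  rw [Tmat1, tauToeplitz, of_apply, of_apply, if_pos (abs_le.2 ⟨by omega, by omega⟩)]

lemma hatBlock_eq_smul_sum_submatrix (P K : ℕ) (A : Matrix (Fin P × Fin K) (Fin P × Fin K) ℂ) :
    hatBlock P K A = (1 / (P : ℂ)) • ∑ p : Fin P, A.submatrix (p, ·) (p, ·) := by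
  ext i j
  simp [hatBlock, Matrix.sum_apply]

lemma l2_opNorm_hatBlock_le (P K : ℕ) (A : Matrix (Fin P × Fin K) (Fin P × Fin K) ℂ) :
    ‖hatBlock P K A‖ ≤ ‖A‖ := by
  have hblock (p : Fin P) : ‖A.submatrix (p, ·) (p, ·)‖ ≤ ‖A‖ :=
    l2_opNorm_submatrix_le A fun _ _ h => (Prod.mk.inj h).2
  rw [hatBlock_eq_smul_sum_submatrix, norm_smul]
  calc ‖1 / (P : ℂ)‖ * ‖∑ p : Fin P, A.submatrix (p, ·) (p, ·)‖ ≤ 1 / P * (P * ‖A‖) := by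
        grw [norm_sum_le, Finset.sum_le_sum fun p _ => hblock p]
        simp
    _ ≤ ‖A‖ := by
        rcases Nat.eq_zero_or_pos P with rfl | hP
        · simp
        · rw [← mul_assoc, one_div_mul_cancel (by positivity), one_mul]

/-- Contraction properties of the Toeplitzification operators
(Proposition 2.1 of the paper). -/
theorem statement3 :
    (∀ (P K R : ℕ) (A : Matrix (Fin P × Fin K) (Fin P × Fin K) ℂ),
      0 < P → 0 < K → K ≤ R →
      ‖TmatP P K R K A‖ ≤
        (⨆ ν ∈ Set.Icc (0:ℝ) 1,
          ‖star (aVec K ν) ⬝ᵥ (hatBlock P K A).mulVec (aVec K ν)‖) ∧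
      (⨆ ν ∈ Set.Icc (0:ℝ) 1,
          ‖star (aVec K ν) ⬝ᵥ (hatBlock P K A).mulVec (aVec K ν)‖) ≤ ‖A‖) ∧
    (∀ (K R : ℕ) (A : Matrix (Fin K) (Fin K) ℂ),
      0 < K → 0 < R → R ≤ K →
      ‖Tmat1 K R R A‖ ≤
        (⨆ ν ∈ Set.Icc (0:ℝ) 1,
          ‖star (aVec K ν) ⬝ᵥ A.mulVec (aVec K ν)‖) ∧
      (⨆ ν ∈ Set.Icc (0:ℝ) 1,
          ‖star (aVec K ν) ⬝ᵥ A.mulVec (aVec K ν)‖) ≤ ‖A‖) := by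
  refine ⟨fun P K R A _ _ _ => ?_, fun K R A _ _ _ => ?_⟩
  · rw [TmatP_eq_tauToeplitz]
    exact ⟨norm_tauToeplitz_le _ fun ν hν => norm_quadForm_aVec_le_iSup _ hν,
      (iSup_norm_quadForm_aVec_le _).trans (l2_opNorm_hatBlock_le P K A)⟩
  · rw [Tmat1_self_eq_tauToeplitz]
    exact ⟨norm_tauToeplitz_le _ fun ν hν => norm_quadForm_aVec_le_iSup _ hν,
      iSup_norm_quadForm_aVec_le _⟩
end
end

section
/- If A is a PK×PK Hermitian positive definite matrix, then for each integer R ≥ K the R×R Toeplitz matrix T^{(P)}_{R,K}(A) is Hermitian positive definite. If A is a K×K Hermitian positive definite matrix and R ≤ K, then T_{R,R}(A) is Hermitian positive definite. -/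
open MeasureTheory ProbabilityTheory Matrix Filter Topology Finset Kronecker
open scoped Matrix.Norms.L2Operator ComplexOrder

noncomputable section

/-!
Write `τ^{(P)}(A)(m) = (1/(PK)) ∑_p d_m(A^{p,p})`, where `d_m(B) = ∑_{k-l=m} B k l` is the sum of
the `m`-th diagonal of `B`. The Toeplitz matrix `(d_{i-j}(B))_{i,j<N}` equals `∑_t E_tᴴ B E_t`,
where `E_t x = (x_{t+k})_{k<K}` is the zero-padded window of `x` starting at `t`. Each summand is
positive semidefinite, and for `x ≠ 0` the window starting at a nonzero coordinate of `x` is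
nonzero, so its summand is strictly positive when `B` is positive definite. Both `T^{(P)}_{R,K}(A)`
and `T_{R,R}(A)` are positive multiples of sums of such Toeplitz matrices: their band cut-off
only removes diagonals `m` with `|m| ≥ K`, on which `d_m` vanishes anyway.
-/

namespace Matrix

variable {α : Type*} [CommRing α] {K N : ℕ}

def diagSum (B : Matrix (Fin K) (Fin K) α) (m : ℤ) : α :=
  ∑ k : Fin K, ∑ l : Fin K, if (k : ℤ) - (l : ℤ) = m then B k l else 0

variable (N) in
def diagSumToeplitz (B : Matrix (Fin K) (Fin K) α) : Matrix (Fin N) (Fin N) α :=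
  of fun i j => diagSum B ((i : ℤ) - (j : ℤ))

variable (α K N) in
def windowMatrix (t : ℤ) : Matrix (Fin K) (Fin N) α :=
  of fun k i => if (i : ℤ) = t + k then 1 else 0

theorem diagSum_eq_zero_of_le_abs {B : Matrix (Fin K) (Fin K) α} {m : ℤ} (hm : K ≤ |m|) :
    diagSum B m = 0 :=
  sum_eq_zero fun k _ => sum_eq_zero fun l _ => if_neg fun h => by
    rw [← h, le_abs'] at hm
    omega

lemma sum_window_indicator (i j : Fin N) (k l : Fin K) (b : α) :
    ∑ t ∈ Icc (1 - K : ℤ) (N - 1),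
        (if (i : ℤ) = t + k then 1 else 0) * b * (if (j : ℤ) = t + l then 1 else 0)
      = if (k : ℤ) - (l : ℤ) = (i : ℤ) - (j : ℤ) then b else 0 := by
  rw [sum_eq_single_of_mem ((i : ℤ) - k) (by simp only [mem_Icc]; omega)]
  · split_ifs <;> first | omega | simp
  · intro t _ ht
    rw [if_neg (by omega), zero_mul, zero_mul]

variable [StarRing α]

variable (N) in
theorem diagSumToeplitz_eq_sum (B : Matrix (Fin K) (Fin K) α) :
    diagSumToeplitz N B = ∑ t ∈ Icc (1 - K : ℤ) (N - 1),
      (windowMatrix α K N t)ᴴ * B * windowMatrix α K N t := by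
  ext i j
  simp only [diagSumToeplitz, diagSum, windowMatrix, sum_apply, Matrix.mul_apply,
    Matrix.conjTranspose_apply, of_apply, apply_ite star, star_one, star_zero, sum_mul]
  rw [eq_comm, sum_comm_cycle, sum_comm_cycle, sum_comm]
  exact sum_congr rfl fun k _ => sum_congr rfl fun l _ => sum_window_indicator i j k l (B k l)

theorem posDef_diagSumToeplitz [PartialOrder α] [StarOrderedRing α] (hK : 0 < K)
    {B : Matrix (Fin K) (Fin K) α} (hB : B.PosDef) : (diagSumToeplitz N B).PosDef := by
  have hterm (t : ℤ) : ((windowMatrix α K N t)ᴴ * B * windowMatrix α K N t).PosSemidef :=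
    hB.posSemidef.conjTranspose_mul_mul_same _
  rw [diagSumToeplitz_eq_sum]
  refine .of_dotProduct_mulVec_pos (posSemidef_sum _ fun t _ => hterm t).isHermitian
    fun x hx => ?_
  obtain ⟨i, hi⟩ := Function.ne_iff.mp hx
  have hwindow : windowMatrix α K N i *ᵥ x ≠ 0 := fun h => hi <| by
    simpa [windowMatrix, mulVec, dotProduct, Fin.val_inj] using congrFun h ⟨0, hK⟩
  rw [sum_mulVec, dotProduct_sum]
  refine sum_pos' (fun t _ => (hterm t).dotProduct_mulVec_nonneg x) ⟨i, ?_, ?_⟩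
  · simp only [mem_Icc]
    omega
  · simpa only [star_mulVec, dotProduct_mulVec, vecMul_vecMul] using
      hB.dotProduct_mulVec_pos hwindow

end Matrix

theorem TmatP_eq_smul_sum_diagSumToeplitz (P K N : ℕ)
    (A : Matrix (Fin P × Fin K) (Fin P × Fin K) ℂ) :
    TmatP P K N K A = (1 / (P * K) : ℝ) •
      ∑ p : Fin P, diagSumToeplitz N (A.submatrix (Prod.mk p) (Prod.mk p)) := by
  ext i j
  rw [TmatP, of_apply, Matrix.smul_apply, Matrix.sum_apply, Complex.real_smul]
  split_ifs with h
  · push_cast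
    rfl
  · simp only [diagSumToeplitz, of_apply]
    rw [sum_eq_zero fun p _ => diagSum_eq_zero_of_le_abs (by omega), mul_zero]

theorem Tmat1_eq_smul_diagSumToeplitz (K N : ℕ) (A : Matrix (Fin K) (Fin K) ℂ) :
    Tmat1 K N N A = (1 / K : ℝ) • diagSumToeplitz N A := by
  ext i j
  rw [Tmat1, of_apply, if_pos (abs_le.2 ⟨by omega, by omega⟩), Matrix.smul_apply,
    Complex.real_smul]
  push_cast
  rfl

/-- The Toeplitzification operators preserve positive definiteness
(Proposition 2.2 of the paper). -/
theorem statement4 :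
    (∀ (P K R : ℕ) (A : Matrix (Fin P × Fin K) (Fin P × Fin K) ℂ),
      0 < P → 0 < K → K ≤ R → A.PosDef → (TmatP P K R K A).PosDef) ∧
    (∀ (K R : ℕ) (A : Matrix (Fin K) (Fin K) ℂ),
      0 < R → R ≤ K → A.PosDef → (Tmat1 K R R A).PosDef) := by
  refine ⟨fun P K R A hP hK _ hA => ?_, fun K R A hR hRK hA => ?_⟩
  · rw [TmatP_eq_smul_sum_diagSumToeplitz]
    refine (posDef_sum ⟨⟨0, hP⟩, mem_univ _⟩ fun p _ => ?_).smul (by simp [hP, hK])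
    exact posDef_diagSumToeplitz hK (hA.submatrix (Prod.mk_right_injective p))
  · rw [Tmat1_eq_smul_diagSumToeplitz]
    have hK : 0 < K := hR.trans_le hRK
    exact (posDef_diagSumToeplitz hK hA).smul (by simp [hK])
end
end

section
/- If A is a K×K complex matrix and R ≥ K is an integer, then T_{R,K}(A) (T_{R,K}(A))* ≤ T_{R,K}(A A*) in the Loewner order. If A is a K×K complex matrix and R ≤ K, then T_{R,R}(A) (T_{R,R}(A))* ≤ T_{R,R}(A A*). -/
open MeasureTheory ProbabilityTheory Matrix Filter Topology Finset Kronecker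
open scoped Matrix.Norms.L2Operator ComplexOrder

noncomputable section

/-!
Writing `E_m` for the `R × K` partial shift with `(E_m)_{i,u} = 1` iff `u = i + m`, one has
`T_{R,Q}(B) = (1/K) ∑_m E_m B E_mᴴ` as soon as `min K R ≤ Q`: then the band cut-off `|i - j| < Q`
removes only entries where `τ(B)` already vanishes. So `T_{R,Q}` is `1/K` times a map in Kraus
form, and the inequality is the Kadison–Schwarz inequality `Φ(A) Φ(A)ᴴ ≤ ‖Φ(1)‖ Φ(A Aᴴ)` with
`Φ(1) = K`. Concretely, the `i`-th entry of `∑_m E_m w_m` is the sum of the `K` numbers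
`w_{u-i}(u)`, so Cauchy–Schwarz bounds the row operator `(w_m) ↦ ∑_m E_m w_m` by `√K`.
-/

namespace Matrix

variable {ι m n : Type*} [Fintype n]

def krausSum (s : Finset ι) (V : ι → Matrix m n ℂ) (B : Matrix n n ℂ) : Matrix m m ℂ :=
  ∑ i ∈ s, V i * B * (V i)ᴴ

lemma conjTranspose_krausSum (s : Finset ι) (V : ι → Matrix m n ℂ) (B : Matrix n n ℂ) :
    (krausSum s V B)ᴴ = krausSum s V Bᴴ := by
  simp only [krausSum, conjTranspose_sum, conjTranspose_mul, conjTranspose_conjTranspose,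
    Matrix.mul_assoc]

lemma krausSum_mulVec [Fintype m] (s : Finset ι) (V : ι → Matrix m n ℂ) (B : Matrix n n ℂ)
    (x : m → ℂ) : krausSum s V B *ᵥ x = ∑ i ∈ s, V i *ᵥ (B *ᵥ ((V i)ᴴ *ᵥ x)) := by
  simp only [krausSum, sum_mulVec, mulVec_mulVec, Matrix.mul_assoc]

lemma star_dotProduct_self_eq_sum_norm_sq [Fintype m] (v : m → ℂ) :
    star v ⬝ᵥ v = ((∑ a, ‖v a‖ ^ 2 : ℝ) : ℂ) := by
  simp only [dotProduct, Pi.star_apply, RCLike.star_def, Complex.conj_mul', Complex.ofReal_sum,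
    Complex.ofReal_pow]

lemma star_dotProduct_mul_conjTranspose_mulVec [Fintype m] {k : Type*} [Fintype k]
    (Q : Matrix m k ℂ) (x : m → ℂ) :
    star x ⬝ᵥ ((Q * Qᴴ) *ᵥ x) = star (Qᴴ *ᵥ x) ⬝ᵥ (Qᴴ *ᵥ x) := by
  rw [← mulVec_mulVec, dotProduct_mulVec, star_mulVec, conjTranspose_conjTranspose]

/-- Kadison–Schwarz inequality for a map in Kraus form whose row operator
`(wᵢ) ↦ ∑ Vᵢ wᵢ` has norm at most `√c`. -/
theorem posSemidef_smul_krausSum_sub_mul_conjTranspose [Fintype m] (s : Finset ι)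
    (V : ι → Matrix m n ℂ) {c : ℝ}
    (hV : ∀ w : ι → n → ℂ, ∑ a, ‖(∑ i ∈ s, V i *ᵥ w i) a‖ ^ 2 ≤ c * ∑ i ∈ s, ∑ b, ‖w i b‖ ^ 2)
    (A : Matrix n n ℂ) :
    (c • krausSum s V (A * Aᴴ) - krausSum s V A * (krausSum s V A)ᴴ).PosSemidef := by
  refine PosSemidef.of_dotProduct_mulVec_nonneg ?_ fun x => ?_
  · refine IsHermitian.sub ?_ (isHermitian_mul_conjTranspose_self _)
    exact (IsSelfAdjoint.all c).smul
      ((conjTranspose_krausSum s V _).trans (by rw [conjTranspose_mul, conjTranspose_conjTranspose]))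
  set w : ι → n → ℂ := fun i => Aᴴ *ᵥ ((V i)ᴴ *ᵥ x)
  have hP : star x ⬝ᵥ (krausSum s V (A * Aᴴ) *ᵥ x) = ((∑ i ∈ s, ∑ b, ‖w i b‖ ^ 2 : ℝ) : ℂ) := by
    calc star x ⬝ᵥ (krausSum s V (A * Aᴴ) *ᵥ x)
        = ∑ i ∈ s, star x ⬝ᵥ ((V i * A * (V i * A)ᴴ) *ᵥ x) := by
          simp only [krausSum, sum_mulVec, dotProduct_sum, conjTranspose_mul, Matrix.mul_assoc]
      _ = ∑ i ∈ s, star (w i) ⬝ᵥ w i := by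
          refine Finset.sum_congr rfl fun i _ => ?_
          rw [star_dotProduct_mul_conjTranspose_mulVec, conjTranspose_mul, ← mulVec_mulVec]
      _ = _ := by simp only [star_dotProduct_self_eq_sum_norm_sq, Complex.ofReal_sum]
  have hQ : (krausSum s V A)ᴴ *ᵥ x = ∑ i ∈ s, V i *ᵥ w i := by
    rw [conjTranspose_krausSum, krausSum_mulVec]
  rw [sub_mulVec, dotProduct_sub, smul_mulVec, dotProduct_smul, hP,
    star_dotProduct_mul_conjTranspose_mulVec, hQ, star_dotProduct_self_eq_sum_norm_sq,
    Complex.real_smul, ← Complex.ofReal_mul, ← Complex.ofReal_sub, Complex.zero_le_real,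
    sub_nonneg]
  exact hV w

end Matrix

def partialShift (R K : ℕ) (m : ℤ) : Matrix (Fin R) (Fin K) ℂ :=
  of fun i u => if (u : ℤ) = i + m then 1 else 0

lemma partialShift_mul_mul_conjTranspose_apply {K R : ℕ} (m : ℤ)
    (B : Matrix (Fin K) (Fin K) ℂ) (i j : Fin R) :
    (partialShift R K m * B * (partialShift R K m)ᴴ) i j =
      ∑ u : Fin K, ∑ v : Fin K, if (u : ℤ) = i + m ∧ (v : ℤ) = j + m then B u v else 0 := by
  simp only [mul_apply, partialShift, conjTranspose_apply, of_apply, Finset.sum_mul]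
  rw [Finset.sum_comm]
  refine Finset.sum_congr rfl fun u _ => Finset.sum_congr rfl fun v _ => ?_
  split_ifs <;> simp_all

lemma krausSum_partialShift_apply {K R : ℕ} (B : Matrix (Fin K) (Fin K) ℂ) (i j : Fin R) :
    krausSum (Finset.Ioo (-(R : ℤ)) K) (partialShift R K) B i j =
      ∑ u : Fin K, ∑ v : Fin K, if (u : ℤ) - v = i - j then B u v else 0 := by
  simp only [krausSum, Matrix.sum_apply, partialShift_mul_mul_conjTranspose_apply]
  rw [Finset.sum_comm]
  refine Finset.sum_congr rfl fun u _ => ?_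
  rw [Finset.sum_comm]
  refine Finset.sum_congr rfl fun v _ => ?_
  have hm : ∀ m : ℤ, ((u : ℤ) = i + m ∧ (v : ℤ) = j + m) ↔ (m = u - i ∧ (u : ℤ) - v = i - j) :=
    fun m => by omega
  simp only [hm, ite_and, Finset.sum_ite_eq']
  exact if_pos (Finset.mem_Ioo.2 ⟨by omega, by omega⟩)

lemma Tmat1_eq_smul_krausSum {K R Q : ℕ} (hQ : min K R ≤ Q) (B : Matrix (Fin K) (Fin K) ℂ) :
    Tmat1 K R Q B = (1 / (K : ℂ)) • krausSum (Finset.Ioo (-(R : ℤ)) K) (partialShift R K) B := by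
  ext i j
  rw [Matrix.smul_apply, krausSum_partialShift_apply, smul_eq_mul, Tmat1, of_apply, tau1]
  split_ifs with h
  · rfl
  · rw [abs_le, not_and_or, not_le, not_le] at h
    refine (mul_eq_zero_of_right _ (Finset.sum_eq_zero fun u _ => Finset.sum_eq_zero
      fun v _ => if_neg ?_)).symm
    omega

lemma sum_partialShift_mulVec_apply {K R : ℕ} (w : ℤ → Fin K → ℂ) (i : Fin R) :
    (∑ m ∈ Finset.Ioo (-(R : ℤ)) K, partialShift R K m *ᵥ w m) i =
      ∑ u : Fin K, w (u - i) u := by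
  simp only [Finset.sum_apply, mulVec, dotProduct, partialShift, of_apply, ite_mul, one_mul,
    zero_mul]
  rw [Finset.sum_comm]
  refine Finset.sum_congr rfl fun u _ => ?_
  have hm : ∀ m : ℤ, (u : ℤ) = i + m ↔ m = u - i := fun m => by omega
  simp only [hm, Finset.sum_ite_eq']
  exact if_pos (Finset.mem_Ioo.2 ⟨by omega, by omega⟩)

lemma sum_norm_sq_sum_partialShift_mulVec_le {K R : ℕ} (w : ℤ → Fin K → ℂ) :
    ∑ i, ‖(∑ m ∈ Finset.Ioo (-(R : ℤ)) K, partialShift R K m *ᵥ w m) i‖ ^ 2 ≤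
      K * ∑ m ∈ Finset.Ioo (-(R : ℤ)) K, ∑ u, ‖w m u‖ ^ 2 := by
  have hfiber : ∀ u : Fin K,
      ∑ i : Fin R, ‖w (u - i) u‖ ^ 2 ≤ ∑ m ∈ Finset.Ioo (-(R : ℤ)) K, ‖w m u‖ ^ 2 := by
    intro u
    have hinj : Set.InjOn (fun i : Fin R => (u : ℤ) - i) (Finset.univ : Finset (Fin R)) :=
      fun i _ j _ hij => Fin.ext (by simp only at hij; omega)
    rw [← Finset.sum_image (f := fun m => ‖w m u‖ ^ 2) hinj]
    refine Finset.sum_le_sum_of_subset_of_nonneg ?_ fun _ _ _ => by positivity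
    intro m hm
    obtain ⟨i, -, rfl⟩ := Finset.mem_image.1 hm
    exact Finset.mem_Ioo.2 ⟨by omega, by omega⟩
  calc ∑ i, ‖(∑ m ∈ Finset.Ioo (-(R : ℤ)) K, partialShift R K m *ᵥ w m) i‖ ^ 2
      = ∑ i : Fin R, ‖∑ u : Fin K, w (u - i) u‖ ^ 2 := by
        simp only [sum_partialShift_mulVec_apply]
    _ ≤ ∑ i : Fin R, K * ∑ u : Fin K, ‖w (u - i) u‖ ^ 2 := by
        refine Finset.sum_le_sum fun i _ => ?_
        calc ‖∑ u : Fin K, w (u - i) u‖ ^ 2 ≤ (∑ u : Fin K, ‖w (u - i) u‖) ^ 2 := by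
              gcongr; exact norm_sum_le _ _
          _ ≤ K * ∑ u : Fin K, ‖w (u - i) u‖ ^ 2 := by
              simpa using sq_sum_le_card_mul_sum_sq (s := Finset.univ)
                (f := fun u : Fin K => ‖w (u - i) u‖)
    _ = K * ∑ u : Fin K, ∑ i : Fin R, ‖w (u - i) u‖ ^ 2 := by
        rw [← Finset.mul_sum, Finset.sum_comm]
    _ ≤ K * ∑ u : Fin K, ∑ m ∈ Finset.Ioo (-(R : ℤ)) K, ‖w m u‖ ^ 2 := by
        gcongr with u; exact hfiber u
    _ = K * ∑ m ∈ Finset.Ioo (-(R : ℤ)) K, ∑ u, ‖w m u‖ ^ 2 := by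
        rw [Finset.sum_comm]

lemma Tmat1_mul_conjTranspose_le {K R Q : ℕ} (hQ : min K R ≤ Q) (A : Matrix (Fin K) (Fin K) ℂ) :
    (Tmat1 K R Q (A * Aᴴ) - Tmat1 K R Q A * (Tmat1 K R Q A)ᴴ).PosSemidef := by
  have hKraus := posSemidef_smul_krausSum_sub_mul_conjTranspose _ _
    (sum_norm_sq_sum_partialShift_mulVec_le (R := R)) A
  rw [Tmat1_eq_smul_krausSum hQ, Tmat1_eq_smul_krausSum hQ]
  convert hKraus.smul (a := ((K : ℝ) ^ 2)⁻¹) (by positivity) using 1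
  have hstar : star (1 / (K : ℂ)) = 1 / K := by simp
  rw [conjTranspose_smul, smul_mul_smul_comm, smul_sub, smul_smul, hstar]
  simp only [← Complex.coe_smul]
  rcases Nat.eq_zero_or_pos K with rfl | hK
  · simp
  · congr 2 <;> push_cast <;> field_simp

/-- `T_{R,K}(A) T_{R,K}(A)^* ≤ T_{R,K}(A A^*)` in the Loewner order
(Proposition 2.3 of the paper). -/
theorem statement5 :
    (∀ (K R : ℕ) (A : Matrix (Fin K) (Fin K) ℂ), K ≤ R →
      (Tmat1 K R K (A * Aᴴ) - Tmat1 K R K A * (Tmat1 K R K A)ᴴ).PosSemidef) ∧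
    (∀ (K R : ℕ) (A : Matrix (Fin K) (Fin K) ℂ), R ≤ K →
      (Tmat1 K R R (A * Aᴴ) - Tmat1 K R R A * (Tmat1 K R R A)ᴴ).PosSemidef) :=
  ⟨fun _ _ A _ => Tmat1_mul_conjTranspose_le (min_le_left _ _) A,
    fun _ _ A _ => Tmat1_mul_conjTranspose_le (min_le_right _ _) A⟩
end
end
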